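/- Let C ⊆ F_2^n be a nonempty code with distance distribution (A_i), let 1 ≤ w ≤ n, and define the binomial moment F_w = Σ_{i=0}^{w} binom(n−i, n−w)·A_i. If f(x) = Σ_k f_k K_k(x) has f_k ≥ 0 for 1 ≤ k ≤ n and f(i) ≤ binom(n−i, n−w) for all 0 ≤ i ≤ n (with binom(n−i,n−w) interpreted as 0 when i > w), then F_w ≥ |C|·f_0 − f(0). -/

import Mathlib

open Finset

noncomputable def distDistr (n : ℕ) (C : Finset (Fin n → ZMod 2)) (i : ℕ) : ℝ :=
  (((C ×ˢ C).filter (fun p => hammingDist p.1 p.2 = i)).card : ℝ) / (C.card : ℝ)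

noncomputable def kraw (n k i : ℕ) : ℝ :=
  ∑ j ∈ Finset.range (k + 1), (-1 : ℝ) ^ j * (i.choose j : ℝ) * ((n - i).choose (k - j) : ℝ)

/-!
Delsarte's linear-programming argument. Counting the `k`-sets `S` by `#(S ∩ T)` gives
`K_k(#T) = ∑_{#S = k} (-1)^{#(S ∩ T)}`, so `K_k(d(u,v)) = ∑_{#S = k} χ_S(u) χ_S(v)` for the Walsh
characters `χ_S`, and `∑_{u,v ∈ C} K_k(d(u,v)) = ∑_{#S = k} (∑_{c ∈ C} χ_S(c))² ≥ 0`. Expanding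
`f = ∑ f_k K_k` then gives `∑_i f(i) A_i = ∑_k f_k ∑_i K_k(i) A_i ≥ |C| f_0`, the `k = 0` term
being `f_0 ∑_i A_i = |C| f_0`. Finally `f(i) ≤ binom(n-i, n-w)` termwise, and the `i = 0` term alone
(where `A_0 = 1`) already contributes a slack `binom(n, n-w) - f(0) ≥ -f(0)`.
-/

section Krawtchouk

variable {α : Type*} [Fintype α] [DecidableEq α]

theorem card_powersetCard_filter_card_inter_eq (T : Finset α) {j k : ℕ} (hjk : j ≤ k) :
    #{S ∈ powersetCard k univ | #(S ∩ T) = j}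
      = (#T).choose j * (Fintype.card α - #T).choose (k - j) := by
  rw [← card_compl, ← card_powersetCard, ← card_powersetCard, ← card_product]
  refine card_nbij' (fun S => (S ∩ T, S \ T)) (fun p => p.1 ∪ p.2) ?_ ?_ ?_ ?_
  · intro S hS
    obtain ⟨hSk, hSTj⟩ : #S = k ∧ #(S ∩ T) = j := by simpa using hS
    have := card_inter_add_card_sdiff S T
    simp only [mem_coe, mem_product, mem_powersetCard]
    grind [mem_compl]
  · rintro ⟨A, B⟩ h
    obtain ⟨⟨hAT, rfl⟩, hBT, hB⟩ : (A ⊆ T ∧ #A = j) ∧ B ⊆ Tᶜ ∧ #B = k - j := by simpa using h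
    have hAB : Disjoint A B := disjoint_of_subset_left hAT (subset_compl_iff_disjoint_left.1 hBT)
    have hABT : (A ∪ B) ∩ T = A := by grind [mem_compl]
    simp [card_union_of_disjoint hAB, hB, hABT, hjk]
  · intro S _
    grind
  · rintro ⟨A, B⟩ h
    obtain ⟨⟨hAT, -⟩, hBT, -⟩ : (A ⊆ T ∧ #A = j) ∧ B ⊆ Tᶜ ∧ #B = k - j := by simpa using h
    ext x <;> grind [mem_compl]

theorem sum_powersetCard_neg_one_pow_card_inter (T : Finset α) (k : ℕ) :
    ∑ S ∈ powersetCard k univ, (-1 : ℝ) ^ #(S ∩ T) = kraw (Fintype.card α) k #T := by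
  have hmaps : ∀ S ∈ powersetCard k univ, #(S ∩ T) ∈ range (k + 1) := fun S hS => by
    rw [mem_range, Nat.lt_succ_iff, ← (mem_powersetCard.1 hS).2]
    exact card_le_card inter_subset_left
  rw [← sum_fiberwise_of_maps_to hmaps, kraw]
  refine sum_congr rfl fun j hj => ?_
  rw [sum_congr rfl fun S hS => by rw [(mem_filter.1 hS).2], sum_const, nsmul_eq_mul,
    card_powersetCard_filter_card_inter_eq T (Nat.lt_succ_iff.1 (mem_range.1 hj))]
  push_cast
  ring

theorem kraw_zero_left (n i : ℕ) : kraw n 0 i = 1 := by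
  simp [kraw]

end Krawtchouk

section Walsh

variable {ι : Type*} [Fintype ι] [DecidableEq ι]

noncomputable def walshChar (S : Finset ι) (u : ι → ZMod 2) : ℝ :=
  ∏ j ∈ S, (-1) ^ (u j).val

theorem neg_one_pow_val_mul_neg_one_pow_val (a b : ZMod 2) :
    (-1 : ℝ) ^ a.val * (-1) ^ b.val = if a ≠ b then -1 else 1 := by
  obtain rfl | rfl : a = 0 ∨ a = 1 := by revert a; decide
  all_goals obtain rfl | rfl : b = 0 ∨ b = 1 := by revert b; decide
  all_goals simp [ZMod.val_one]

theorem walshChar_mul_walshChar (S : Finset ι) (u v : ι → ZMod 2) :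
    walshChar S u * walshChar S v = (-1) ^ #(S ∩ ({j | u j ≠ v j} : Finset ι)) := by
  simp only [walshChar, ← prod_mul_distrib, neg_one_pow_val_mul_neg_one_pow_val, prod_ite,
    prod_const, one_pow, mul_one, inter_filter, inter_univ]

theorem kraw_hammingDist (k : ℕ) (u v : ι → ZMod 2) :
    kraw (Fintype.card ι) k (hammingDist u v)
      = ∑ S ∈ powersetCard k univ, walshChar S u * walshChar S v := by
  simp only [walshChar_mul_walshChar, hammingDist, sum_powersetCard_neg_one_pow_card_inter]

theorem sum_kraw_hammingDist_nonneg (k : ℕ) (C : Finset (ι → ZMod 2)) :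
    0 ≤ ∑ p ∈ C ×ˢ C, kraw (Fintype.card ι) k (hammingDist p.1 p.2) := by
  have hsq : ∑ p ∈ C ×ˢ C, kraw (Fintype.card ι) k (hammingDist p.1 p.2)
      = ∑ S ∈ powersetCard k univ, (∑ c ∈ C, walshChar S c) ^ 2 := by
    simp only [kraw_hammingDist]
    rw [sum_comm]
    refine sum_congr rfl fun S _ => ?_
    rw [sq, sum_mul_sum, sum_product]
  rw [hsq]
  positivity

end Walsh

section DistanceDistribution

variable {n : ℕ} (C : Finset (Fin n → ZMod 2))

theorem distDistr_nonneg (i : ℕ) : 0 ≤ distDistr n C i := by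
  unfold distDistr
  positivity

theorem distDistr_zero (hC : C.Nonempty) : distDistr n C 0 = 1 := by
  have hdiag : (C ×ˢ C).filter (fun p => hammingDist p.1 p.2 = 0) = C.diag := by
    ext p
    simp only [mem_filter, hammingDist_eq_zero, mem_diag, mem_product]
    grind
  rw [distDistr, hdiag, diag_card, div_self (Nat.cast_ne_zero.2 hC.card_pos.ne')]

theorem sum_mul_distDistr (g : ℕ → ℝ) :
    ∑ i ∈ range (n + 1), g i * distDistr n C i
      = (∑ p ∈ C ×ˢ C, g (hammingDist p.1 p.2)) / #C := by
  have hmaps : ∀ p ∈ C ×ˢ C, hammingDist p.1 p.2 ∈ range (n + 1) := fun p _ =>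
    mem_range.2 (Nat.lt_succ_of_le ((hammingDist_le_card_fintype).trans (Fintype.card_fin n).le))
  rw [← sum_fiberwise_of_maps_to hmaps, sum_div]
  refine sum_congr rfl fun i _ => ?_
  rw [sum_congr rfl fun p hp => by rw [(mem_filter.1 hp).2], sum_const, nsmul_eq_mul, distDistr]
  ring

theorem sum_distDistr : ∑ i ∈ range (n + 1), distDistr n C i = #C := by
  have := sum_mul_distDistr C fun _ => 1
  simp only [one_mul, sum_const, card_product, nsmul_one] at this
  rw [this]
  push_cast
  exact mul_self_div_self _

theorem sum_kraw_mul_distDistr_nonneg (k : ℕ) :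
    0 ≤ ∑ i ∈ range (n + 1), kraw n k i * distDistr n C i := by
  rw [sum_mul_distDistr]
  have := sum_kraw_hammingDist_nonneg k C
  rw [Fintype.card_fin] at this
  exact div_nonneg this (Nat.cast_nonneg _)

theorem card_mul_le_sum_mul_distDistr (fc : ℕ → ℝ) (hfc : ∀ k, 1 ≤ k → k ≤ n → 0 ≤ fc k) :
    #C * fc 0 ≤ ∑ i ∈ range (n + 1), (∑ k ∈ range (n + 1), fc k * kraw n k i) * distDistr n C i := by
  have hswap : ∑ i ∈ range (n + 1), (∑ k ∈ range (n + 1), fc k * kraw n k i) * distDistr n C i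
      = ∑ k ∈ range (n + 1), fc k * ∑ i ∈ range (n + 1), kraw n k i * distDistr n C i := by
    simp only [sum_mul, mul_sum, mul_assoc]
    exact sum_comm
  have htail : 0 ≤ ∑ k ∈ range n,
      fc (k + 1) * ∑ i ∈ range (n + 1), kraw n (k + 1) i * distDistr n C i :=
    sum_nonneg fun k hk => mul_nonneg (hfc _ k.succ_pos (mem_range.1 hk))
      (sum_kraw_mul_distDistr_nonneg C _)
  rw [hswap, sum_range_succ']
  simp only [kraw_zero_left, one_mul, sum_distDistr]
  linarith

end DistanceDistribution

theorem stmt9_general (n w : ℕ) (hwn : w ≤ n)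
    (C : Finset (Fin n → ZMod 2)) (hC : C.Nonempty)
    (fc : ℕ → ℝ)
    (hfc : ∀ k, 1 ≤ k → k ≤ n → 0 ≤ fc k)
    (hfg : ∀ i, i ≤ n →
      (∑ k ∈ Finset.range (n + 1), fc k * kraw n k i) ≤ ((n - i).choose (n - w) : ℝ)) :
    ∑ i ∈ Finset.range (w + 1), ((n - i).choose (n - w) : ℝ) * distDistr n C i
      ≥ (C.card : ℝ) * fc 0 - (∑ k ∈ Finset.range (n + 1), fc k * kraw n k 0) := by
  set β : ℕ → ℝ := fun i => ((n - i).choose (n - w) : ℝ)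
  set f : ℕ → ℝ := fun i => ∑ k ∈ range (n + 1), fc k * kraw n k i
  have hF : ∑ i ∈ range (w + 1), β i * distDistr n C i
      = ∑ i ∈ range (n + 1), β i * distDistr n C i := by
    refine sum_subset (range_subset_range.2 (by omega)) fun i hi hiw => ?_
    simp only [mem_range] at hi hiw
    simp [β, Nat.choose_eq_zero_of_lt (show n - i < n - w by omega)]
  have hslack : β 0 - f 0 ≤ ∑ i ∈ range (n + 1), (β i - f i) * distDistr n C i := by
    have := single_le_sum (f := fun i => (β i - f i) * distDistr n C i)
      (fun i hi => mul_nonneg (sub_nonneg.2 (hfg i (Nat.lt_succ_iff.1 (mem_range.1 hi))))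
        (distDistr_nonneg C i)) (mem_range.2 n.succ_pos)
    rwa [distDistr_zero C hC, mul_one] at this
  have hLP := card_mul_le_sum_mul_distDistr C fc hfc
  simp only [sub_mul, sum_sub_distrib] at hslack
  rw [ge_iff_le, hF]
  linarith [show (0 : ℝ) ≤ β 0 from Nat.cast_nonneg _]

/-- Lower bound on the binomial moment `F_w = Σ_{i=0}^w binom(n−i,n−w) A_i`. -/
theorem stmt9 (n w : ℕ) (hw1 : 1 ≤ w) (hwn : w ≤ n)
    (C : Finset (Fin n → ZMod 2)) (hC : C.Nonempty)
    (fc : ℕ → ℝ)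
    (hfc : ∀ k, 1 ≤ k → k ≤ n → 0 ≤ fc k)
    (hfg : ∀ i, i ≤ n →
      (∑ k ∈ Finset.range (n + 1), fc k * kraw n k i) ≤ ((n - i).choose (n - w) : ℝ)) :
    ∑ i ∈ Finset.range (w + 1), ((n - i).choose (n - w) : ℝ) * distDistr n C i
      ≥ (C.card : ℝ) * fc 0 - (∑ k ∈ Finset.range (n + 1), fc k * kraw n k 0) :=
  stmt9_general n w hwn C hC fc hfc hfg
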